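/- Let p ∈ (0,1/2], λ > 0, β ≥ 0 and α ∈ (0,1] with α ≤ λ(1−p)/(2p). Let S be a random variable with 0 ≤ S ≤ 2 almost surely such that P[S ≥ ρ·α] ≤ β/ρ for every real ρ ≥ 1. Then 𝔼[ S² · 1{α ≤ S ≤ (1−p)λ/p} ] ≤ 4·(1−p)·λ·α·β/p. -/

import Mathlib

/-!
Restricting `S` to the event `{α ≤ S ≤ M}`, `M = (1-p)λ/p`, gives a variable `Y`
with `0 ≤ Y ≤ M` whose tail obeys `P[Y ≥ t] ≤ αβ/t` for every `t > 0` (apply the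
hypothesis with `ρ = max(1, t/α)`). By the layer-cake formula,
`𝔼[Y²] = ∫₀^M 2t P[Y ≥ t] dt ≤ 2αβM`.
-/

open MeasureTheory ENNReal

section

variable {Ω : Type*} [MeasurableSpace Ω] {μ : Measure Ω}

theorem integral_sq_le_of_meas_le_div {Y : Ω → ℝ} {C M : ℝ} (hY : Measurable Y)
    (hY0 : ∀ ω, 0 ≤ Y ω) (hYM : ∀ ω, Y ω ≤ M) (hC : 0 ≤ C) (hM : 0 ≤ M)
    (htail : ∀ t > 0, μ {ω | t ≤ Y ω} ≤ ENNReal.ofReal (C / t)) :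
    ∫ ω, Y ω ^ 2 ∂μ ≤ 2 * C * M := by
  have hlayer : ∫⁻ ω, ENNReal.ofReal (Y ω ^ 2) ∂μ
      = ENNReal.ofReal 2 * ∫⁻ t in Set.Ioi 0, μ {ω | t ≤ Y ω} * ENNReal.ofReal t := by
    have key :=
      lintegral_rpow_eq_lintegral_meas_le_mul μ (.of_forall hY0) hY.aemeasurable two_pos
    rw [show (2 : ℝ) - 1 = 1 by norm_num] at key
    simpa only [Real.rpow_two, Real.rpow_one] using key
  have hweak : ∀ t ∈ Set.Ioi (0 : ℝ),
      μ {ω | t ≤ Y ω} * ENNReal.ofReal t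
        ≤ (Set.Iic M).indicator (fun _ ↦ ENNReal.ofReal C) t := by
    intro t (ht : 0 < t)
    by_cases htM : t ≤ M
    · calc μ {ω | t ≤ Y ω} * ENNReal.ofReal t
            ≤ ENNReal.ofReal (C / t) * ENNReal.ofReal t := by gcongr; exact htail t ht
        _ = ENNReal.ofReal C := by
            rw [← ENNReal.ofReal_mul (by positivity), div_mul_cancel₀ _ ht.ne']
        _ = _ := (Set.indicator_of_mem (Set.mem_Iic.2 htM) fun _ ↦ ENNReal.ofReal C).symm
    · have hempty : {ω | t ≤ Y ω} = ∅ :=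
        Set.eq_empty_of_forall_notMem fun ω hω ↦ htM ((show t ≤ Y ω from hω).trans (hYM ω))
      simp [hempty]
  have hlin : ∫⁻ ω, ENNReal.ofReal (Y ω ^ 2) ∂μ ≤ ENNReal.ofReal (2 * C * M) :=
    calc ∫⁻ ω, ENNReal.ofReal (Y ω ^ 2) ∂μ
        ≤ ENNReal.ofReal 2
            * ∫⁻ t in Set.Ioi 0, (Set.Iic M).indicator (fun _ ↦ ENNReal.ofReal C) t := by
          rw [hlayer]
          exact mul_le_mul' le_rfl
            (setLIntegral_mono (measurable_const.indicator measurableSet_Iic) hweak)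
      _ = ENNReal.ofReal (2 * C * M) := by
          rw [lintegral_indicator_const measurableSet_Iic, Measure.restrict_apply measurableSet_Iic,
            Set.Iic_inter_Ioi, Real.volume_Ioc, sub_zero, ← ENNReal.ofReal_mul hC,
            ← ENNReal.ofReal_mul zero_le_two, mul_assoc]
  rw [integral_eq_lintegral_of_nonneg_ae (.of_forall fun ω ↦ sq_nonneg (Y ω))
    (hY.pow_const 2).aestronglyMeasurable]
  exact ENNReal.toReal_le_of_le_ofReal (by positivity) hlin

theorem meas_le_indicator_le_div {S : Ω → ℝ} {s : Set Ω} {a β : ℝ}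
    (ha : 0 < a) (hβ : 0 ≤ β) (hs : ∀ ω ∈ s, a ≤ S ω)
    (htail : ∀ ρ : ℝ, 1 ≤ ρ → μ {ω | ρ * a ≤ S ω} ≤ ENNReal.ofReal (β / ρ))
    {t : ℝ} (ht : 0 < t) :
    μ {ω | t ≤ s.indicator S ω} ≤ ENNReal.ofReal (a * β / t) := by
  set ρ := max 1 (t / a)
  have hρa : ρ * a = max a t := by
    rw [max_mul_of_nonneg _ _ ha.le, one_mul, div_mul_cancel₀ _ ha.ne']
  have hsub : {ω | t ≤ s.indicator S ω} ⊆ {ω | ρ * a ≤ S ω} := by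
    intro ω (hω : t ≤ s.indicator S ω)
    by_cases hωs : ω ∈ s
    · rw [Set.indicator_of_mem hωs] at hω
      simpa [hρa] using ⟨hs ω hωs, hω⟩
    · rw [Set.indicator_of_notMem hωs] at hω
      exact absurd hω (not_le.2 ht)
  calc μ {ω | t ≤ s.indicator S ω} ≤ μ {ω | ρ * a ≤ S ω} := measure_mono hsub
    _ ≤ ENNReal.ofReal (β / ρ) := htail ρ (le_max_left _ _)
    _ ≤ ENNReal.ofReal (a * β / t) := by
        refine ENNReal.ofReal_le_ofReal ?_
        calc β / ρ
            ≤ β / (t / a) := div_le_div_of_nonneg_left hβ (by positivity) (le_max_right _ _)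
          _ = a * β / t := by field_simp

end

theorem expectation_sq_gap_intermediate
    {Ω : Type*} [MeasurableSpace Ω] (μ : Measure Ω)
    (p l α β : ℝ)
    (hβ : 0 ≤ β) (hα0 : 0 < α) (hαl : α ≤ l * (1 - p) / (2 * p))
    (S : Ω → ℝ) (hS : Measurable S)
    (htail : ∀ ρ : ℝ, 1 ≤ ρ → μ {ω | ρ * α ≤ S ω} ≤ ENNReal.ofReal (β / ρ)) :
    ∫ ω, (if α ≤ S ω ∧ S ω ≤ (1 - p) * l / p then (S ω) ^ 2 else 0) ∂μ
      ≤ 4 * (1 - p) * l * α * β / p := by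
  set M := (1 - p) * l / p
  have hαM : 2 * α ≤ M := by
    have : l * (1 - p) / (2 * p) = M / 2 := by ring
    linarith
  set s := {ω | α ≤ S ω ∧ S ω ≤ M}
  have hs : MeasurableSet s :=
    (measurableSet_le measurable_const hS).inter (measurableSet_le hS measurable_const)
  have hY0 : ∀ ω, 0 ≤ s.indicator S ω :=
    Set.indicator_nonneg fun ω hω ↦ hα0.le.trans hω.1
  have hYM : ∀ ω, s.indicator S ω ≤ M :=
    Set.indicator_le' (fun ω hω ↦ hω.2) fun _ _ ↦ by linarith
  have hsecond := integral_sq_le_of_meas_le_div (hS.indicator hs) hY0 hYM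
    (mul_nonneg hα0.le hβ) (by linarith)
    fun t ht ↦ meas_le_indicator_le_div hα0 hβ (fun ω hω ↦ hω.1) htail ht
  have hint : ∀ ω,
      (if α ≤ S ω ∧ S ω ≤ M then S ω ^ 2 else 0) = s.indicator S ω ^ 2 := by
    intro ω
    rw [Set.indicator_apply, ite_pow, zero_pow two_ne_zero]
    rfl
  have hbound : 4 * (1 - p) * l * α * β / p = 4 * (α * β) * M := by ring
  simp_rw [hint, hbound]
  linarith [mul_nonneg (mul_nonneg hα0.le hβ) (by linarith : 0 ≤ M)]
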